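/- For every ideal I on a countable set X, the cofinality of the I-Miller null ideal equals the cofinality of K_I and both equal max{𝔡, cof*_ω(I)}: cof(M_I) = cof(K_I) = max{𝔡, cof*_ω(I)}. -/

import Mathlib

open Cardinal Filter Set
open scoped ENNReal

noncomputable section

/-- An ideal on a (countable) set `X`, in the sense of the paper: a proper family of
subsets of `X` closed under taking subsets and finite unions and containing all
finite subsets of `X`. -/
structure IsIdealOn {X : Type} (I : Set (Set X)) : Prop where
  subset_mem : ∀ ⦃A B : Set X⦄, A ⊆ B → B ∈ I → A ∈ I
  union_mem : ∀ ⦃A B : Set X⦄, A ∈ I → B ∈ I → A ∪ B ∈ I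
  finite_mem : ∀ ⦃A : Set X⦄, A.Finite → A ∈ I
  proper : (univ : Set X) ∉ I

/-- The finite initial segment `x ↾ n` of `x : X^ω`, as a list (an element of `X^{<ω}`). -/
def seg {X : Type} (x : ℕ → X) (n : ℕ) : List X := (List.range n).map x

/-- The `I`-Miller null ideal `M_I`: the σ-ideal on `X^ω` generated by the sets
`M_φ = {x | ∀^∞ n, x n ∈ φ (x ↾ n)}`, where `φ : X^{<ω} → I`.  (A set is in the
generated σ-ideal iff it is covered by countably many generators.) -/
def MIdeal {X : Type} (I : Set (Set X)) : Set (Set (ℕ → X)) :=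
  {A | ∃ φ : ℕ → List X → Set X, (∀ n s, φ n s ∈ I) ∧
    A ⊆ ⋃ n, {x : ℕ → X | ∀ᶠ m in atTop, x m ∈ φ n (seg x m)}}

/-- The σ-ideal `K_I` on `X^ω` generated by the sets
`K_φ = {x | ∀^∞ n, x n ∈ φ n}`, where `φ : ω → I`. -/
def KIdeal {X : Type} (I : Set (Set X)) : Set (Set (ℕ → X)) :=
  {A | ∃ φ : ℕ → ℕ → Set X, (∀ n m, φ n m ∈ I) ∧
    A ⊆ ⋃ n, {x : ℕ → X | ∀ᶠ m in atTop, x m ∈ φ n m}}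

/-- Additivity `add(J)` of a (σ-)ideal `J`: the least cardinality of a subfamily of `J`
whose union is not in `J`. -/
def addIdeal {Y : Type} (J : Set (Set Y)) : Cardinal :=
  sInf {c | ∃ 𝒜 : Set (Set Y), 𝒜 ⊆ J ∧ ⋃₀ 𝒜 ∉ J ∧ Cardinal.mk 𝒜 = c}

/-- Covering number `cov(J)`: the least cardinality of a subfamily of `J` covering `Y`. -/
def covIdeal {Y : Type} (J : Set (Set Y)) : Cardinal :=
  sInf {c | ∃ 𝒜 : Set (Set Y), 𝒜 ⊆ J ∧ ⋃₀ 𝒜 = Set.univ ∧ Cardinal.mk 𝒜 = c}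

/-- Uniformity `non(J)`: the least cardinality of a subset of `Y` not in `J`. -/
def nonIdeal {Y : Type} (J : Set (Set Y)) : Cardinal :=
  sInf {c | ∃ S : Set Y, S ∉ J ∧ Cardinal.mk S = c}

/-- Cofinality `cof(J)`: the least cardinality of a cofinal (w.r.t. `⊆`) subfamily of `J`. -/
def cofIdeal {Y : Type} (J : Set (Set Y)) : Cardinal :=
  sInf {c | ∃ 𝒜 : Set (Set Y), 𝒜 ⊆ J ∧ (∀ B ∈ J, ∃ A ∈ 𝒜, B ⊆ A) ∧ Cardinal.mk 𝒜 = c}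

/-- `f ≤* g`: eventual domination on `ω^ω`. -/
def LeStar (f g : ℕ → ℕ) : Prop := ∀ᶠ n in atTop, f n ≤ g n

/-- The bounding number `𝔟`. -/
def bNum : Cardinal :=
  sInf {c | ∃ F : Set (ℕ → ℕ), (∀ g : ℕ → ℕ, ∃ f ∈ F, ¬ LeStar f g) ∧ Cardinal.mk F = c}

/-- The dominating number `𝔡`. -/
def dNum : Cardinal :=
  sInf {c | ∃ F : Set (ℕ → ℕ), (∀ f : ℕ → ℕ, ∃ g ∈ F, LeStar f g) ∧ Cardinal.mk F = c}

/-- `A ⊆* B`: almost inclusion (`A \ B` finite). -/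
def AlSub {X : Type} (A B : Set X) : Prop := (A \ B).Finite

/-- The set of cardinalities of witnessing families for `add*_ω(I)`: families `𝒜 ⊆ I`
such that for every countable `B̄ ⊆ I` some `A ∈ 𝒜` satisfies `A ⊄* B` for all `B ∈ B̄`.
`add*_ω(I)` is the minimum of this set (`∞` if it is empty). -/
def addStarOmegaFam {X : Type} (I : Set (Set X)) : Set Cardinal :=
  {c | ∃ 𝒜 : Set (Set X), 𝒜 ⊆ I ∧
    (∀ B : ℕ → Set X, (∀ n, B n ∈ I) → ∃ A ∈ 𝒜, ∀ n, ¬ AlSub A (B n)) ∧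
    Cardinal.mk 𝒜 = c}

/-- The set of cardinalities of witnessing families for `cof*_ω(I)`: families `𝒜` of
countable subsets of `I` such that for every countable `B̄ ⊆ I` there is `Ā ∈ 𝒜` with:
every `B ∈ B̄` satisfies `B ⊆* A` for some `A ∈ Ā`.  `cof*_ω(I)` is the minimum. -/
def cofStarOmegaFam {X : Type} (I : Set (Set X)) : Set Cardinal :=
  {c | ∃ 𝒜 : Set (Set (Set X)), (∀ As ∈ 𝒜, As.Countable ∧ As ⊆ I) ∧
    (∀ B : ℕ → Set X, (∀ n, B n ∈ I) → ∃ As ∈ 𝒜, ∀ n, ∃ A ∈ As, AlSub (B n) A) ∧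
    Cardinal.mk 𝒜 = c}

/-- The set of cardinalities of witnessing families for `non*_ω(I)`: families `𝒜` of
infinite subsets of `X` such that for every countable `B̄ ⊆ I` there is `A ∈ 𝒜` with
`A ∩ B` finite for all `B ∈ B̄`.  `non*_ω(I)` is the minimum of this set. -/
def nonStarOmegaFam {X : Type} (I : Set (Set X)) : Set Cardinal :=
  {c | ∃ 𝒜 : Set (Set X), (∀ A ∈ 𝒜, A.Infinite) ∧
    (∀ B : ℕ → Set X, (∀ n, B n ∈ I) → ∃ A ∈ 𝒜, ∀ n, (A ∩ B n).Finite) ∧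
    Cardinal.mk 𝒜 = c}

/-- The set of cardinalities of witnessing families for `cov*(I)`: families `𝒜 ⊆ I` such
that every infinite `B ⊆ X` has infinite intersection with some member of `𝒜`.
`cov*(I)` is the minimum of this set (`∞` if it is empty, i.e. if `I` is not tall). -/
def covStarFam {X : Type} (I : Set (Set X)) : Set Cardinal :=
  {c | ∃ 𝒜 : Set (Set X), 𝒜 ⊆ I ∧
    (∀ B : Set X, B.Infinite → ∃ A ∈ 𝒜, (A ∩ B).Infinite) ∧ Cardinal.mk 𝒜 = c}

/-- The set of cardinalities of witnessing families for `non*(I)`: families `𝒜` of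
infinite subsets of `X` such that every `B ∈ I` has finite intersection with some
member of `𝒜`.  `non*(I)` is the minimum of this set. -/
def nonStarFam {X : Type} (I : Set (Set X)) : Set Cardinal :=
  {c | ∃ 𝒜 : Set (Set X), (∀ A ∈ 𝒜, A.Infinite) ∧
    (∀ B ∈ I, ∃ A ∈ 𝒜, (A ∩ B).Finite) ∧ Cardinal.mk 𝒜 = c}

/-- The meager ideal of the product space `X^ω`, where `X` carries the discrete
topology (for countable `X` this is a Polish space). -/
def meagerIdeal (X : Type) : Set (Set (ℕ → X)) :=
  letI : TopologicalSpace X := ⊥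
  {A : Set (ℕ → X) | IsMeagre A}

/-- The Fubini product `I ⊗ J` of two ideals. -/
def Fubini {X Y : Type} (I : Set (Set X)) (J : Set (Set Y)) : Set (Set (X × Y)) :=
  {A | {x : X | {y : Y | (x, y) ∈ A} ∉ J} ∈ I}

/-- The ideal `Fin` of finite subsets of `X`. -/
def finIdeal (X : Type) : Set (Set X) := {A : Set X | A.Finite}

/-- The nowhere dense ideal on `2^{<ω}`: `A` belongs to it iff for every `s` there is an
extension `t ⊇ s` none of whose extensions belongs to `A`. -/
def nwdIdeal : Set (Set (List Bool)) :=
  {A | ∀ s : List Bool, ∃ t : List Bool, s <+: t ∧ ∀ u : List Bool, t <+: u → u ∉ A}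

/-- A submeasure: monotone, finitely subadditive, vanishing on `∅`. -/
def IsSubmeasure (φ : Set ℕ → ℝ≥0∞) : Prop :=
  φ ∅ = 0 ∧ (∀ A B : Set ℕ, A ⊆ B → φ A ≤ φ B) ∧ ∀ A B : Set ℕ, φ (A ∪ B) ≤ φ A + φ B

/-- `I` is gradually fragmented: there are a partition `⟨P n⟩` of `ω` into nonempty finite
sets and submeasures `φ n` with `A ∈ I ↔ sup_n φ n (A ∩ P n) < ∞`, together with
`f : ω → ω` such that for all `n, i`, for all but finitely many `j`: any family of at
most `i` subsets of `P j`, each of `φ j`-value `≤ n`, has union of `φ j`-value `≤ f n`. -/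
def GraduallyFragmented (I : Set (Set ℕ)) : Prop :=
  ∃ (P : ℕ → Set ℕ) (φ : ℕ → Set ℕ → ℝ≥0∞) (f : ℕ → ℕ),
    (∀ n, (P n).Finite) ∧ (∀ n, (P n).Nonempty) ∧
    (∀ n m, n ≠ m → Disjoint (P n) (P m)) ∧ (⋃ n, P n) = Set.univ ∧
    (∀ n, IsSubmeasure (φ n)) ∧
    (∀ A : Set ℕ, A ∈ I ↔ (⨆ n, φ n (A ∩ P n)) < ⊤) ∧
    (∀ n i : ℕ, ∀ᶠ j in atTop, ∀ ℬ : Finset (Set ℕ), ℬ.card ≤ i →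
      (∀ B ∈ ℬ, B ⊆ P j) → (∀ B ∈ ℬ, φ j B ≤ (n : ℝ≥0∞)) →
      φ j (⋃ B ∈ ℬ, B) ≤ ((f n : ℕ) : ℝ≥0∞))

/-- The basic clopen cylinder of `2^ω` determined by a finite binary string. -/
def cylSet (s : List Bool) : Set (ℕ → Bool) :=
  {x | ∀ i : Fin s.length, x i.val = s.get i}

/-- `A ⊆ 2^ω` is null for the uniform (coin-flipping) product measure: for every `ε > 0`
it is covered by countably many cylinders of total weight `≤ ε` (the cylinder of a
string `s` has weight `2^{-|s|}`). -/
def IsNullCantor (A : Set (ℕ → Bool)) : Prop :=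
  ∀ ε : ℝ≥0∞, 0 < ε → ∃ s : ℕ → List Bool,
    A ⊆ (⋃ n, cylSet (s n)) ∧ (∑' n : ℕ, (2⁻¹ : ℝ≥0∞) ^ (s n).length) ≤ ε

/-- Coordinatewise addition modulo 2 on `2^ω`. -/
def xorAdd (x y : ℕ → Bool) : ℕ → Bool := fun n => xor (x n) (y n)

/-- The transitive additivity `add_t(𝒩)` of the null ideal of `2^ω`:
`min {|A| : A ⊆ 2^ω ∧ ∃ X ∈ 𝒩, A + X ∉ 𝒩}`. -/
def addTNull : Cardinal :=
  sInf {c | ∃ A : Set (ℕ → Bool),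
    (∃ N : Set (ℕ → Bool), IsNullCantor N ∧ ¬ IsNullCantor (Set.image2 xorAdd A N)) ∧
    Cardinal.mk A = c}

/-- Kada's cardinal invariant `𝔩`: the least `κ` such that for every `g ∈ ω^ω` there is a
family `𝒮`, of size `κ`, of slaloms `S` with `S i ⊆ {0, …, g i}` and `|S i| ≤ i`, such
that every `f ≤* g` satisfies `f ∈* S` for some `S ∈ 𝒮`. -/
def lNum : Cardinal :=
  sInf {c : Cardinal | ∀ g : ℕ → ℕ, ∃ 𝒮 : Set (ℕ → Finset ℕ),
    (∀ S ∈ 𝒮, ∀ i : ℕ, S i ⊆ Finset.range (g i + 1) ∧ (S i).card ≤ i) ∧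
    (∀ f : ℕ → ℕ, LeStar f g → ∃ S ∈ 𝒮, ∀ᶠ i in atTop, f i ∈ S i) ∧
    Cardinal.mk 𝒮 = c}

/-- Membership in `C ⊆ 2^ω` only depends on the first `n` coordinates. -/
def DeterminedBy (C : Set (ℕ → Bool)) (n : ℕ) : Prop :=
  ∀ x y : ℕ → Bool, (∀ i < n, x i = y i) → (x ∈ C ↔ y ∈ C)

/-- Extension of a finite binary string by `false`s. -/
def extendFalse {n : ℕ} (s : Fin n → Bool) : ℕ → Bool :=
  fun i => if h : i < n then s ⟨i, h⟩ else false

/-- `C ⊆ 2^ω` has uniform product measure `1/2`: for some `n`, membership in `C` depends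
only on the first `n` coordinates and exactly half of the `2^n` cylinders of level `n`
are included in `C`. -/
def HalfMeasure (C : Set (ℕ → Bool)) : Prop :=
  ∃ n : ℕ, DeterminedBy C n ∧
    2 * Nat.card {s : Fin n → Bool // extendFalse s ∈ C} = 2 ^ n

/-- Clopenness in the Cantor space `2^ω` (`Bool` discrete, product topology). -/
def IsClopenCantor (C : Set (ℕ → Bool)) : Prop :=
  letI : TopologicalSpace Bool := ⊥
  IsClopen C

/-- Closedness in the Cantor space `2^ω`. -/
def IsClosedCantor (C : Set (ℕ → Bool)) : Prop :=
  letI : TopologicalSpace Bool := ⊥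
  IsClosed C

/-- `Ω`: the (countable) set of clopen subsets of `2^ω` of measure `1/2`. -/
abbrev SoleckiBase : Type := {C : Set (ℕ → Bool) // IsClopenCantor C ∧ HalfMeasure C}

/-- The Solecki ideal `𝒮` on `Ω`: the ideal generated by the sets
`I_y = {C ∈ Ω : y ∈ C}` for `y ∈ 2^ω`. -/
def SoleckiIdeal : Set (Set SoleckiBase) :=
  {A | ∃ F : Finset (ℕ → Bool), A ⊆ ⋃ y ∈ F, {C : SoleckiBase | y ∈ C.val}}

/-- `cov_ω(𝒩)`: the least cardinality of a family of Lebesgue-null sets of reals such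
that every countable set of reals is contained in one of them. -/
def covOmegaNull : Cardinal :=
  sInf {c | ∃ 𝒜 : Set (Set ℝ), (∀ N ∈ 𝒜, MeasureTheory.volume N = 0) ∧
    (∀ B : Set ℝ, B.Countable → ∃ N ∈ 𝒜, B ⊆ N) ∧ Cardinal.mk 𝒜 = c}

/-- `non(𝒩)`: the least cardinality of a non-null set of reals. -/
def nonNullReal : Cardinal :=
  sInf {c | ∃ S : Set ℝ, MeasureTheory.volume S ≠ 0 ∧ Cardinal.mk S = c}

/-- The eventually different ideal `ℰ𝒟` on `ω × ω`. -/
def EDIdeal : Set (Set (ℕ × ℕ)) :=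
  {A | ∃ k : ℕ, ∀ᶠ n in atTop,
    {m : ℕ | (n, m) ∈ A}.Finite ∧ {m : ℕ | (n, m) ∈ A}.ncard ≤ k}

/-- Characteristic function identifying `P(ω)` with `2^ω`. -/
def chiSet (A : Set ℕ) : ℕ → Bool :=
  fun n => @decide (n ∈ A) (Classical.propDecidable _)

/-- `I ⊆ P(ω)` is `F_σ`: under the identification `P(ω) ≅ 2^ω`, `I` is a countable
union of closed subsets of the Cantor space. -/
def IsFSigmaIdeal (I : Set (Set ℕ)) : Prop :=
  ∃ C : ℕ → Set (ℕ → Bool), (∀ n, IsClosedCantor (C n)) ∧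
    ∀ A : Set ℕ, A ∈ I ↔ chiSet A ∈ ⋃ n, C n

/-- The underlying countable set of `Fin^{⊗(n+1)}`: `FinPowType 0 = ω`,
`FinPowType (n+1) = ω × FinPowType n`. -/
def FinPowType : ℕ → Type
  | 0 => ℕ
  | n + 1 => ℕ × FinPowType n

/-- The iterated Fubini power of `Fin`: `FinPowIdeal 0 = Fin`, and
`FinPowIdeal (n+1) = Fin ⊗ FinPowIdeal n`; thus `Fin^{⊗k} = FinPowIdeal (k-1)`. -/
def FinPowIdeal : (n : ℕ) → Set (Set (FinPowType n))
  | 0 => finIdeal ℕ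
  | n + 1 => Fubini (finIdeal ℕ) (FinPowIdeal n)

/-- `π` `k`-constantly bounding-predicts `f`: for all but finitely many `i` there is
`j ∈ [i, i + k)` with `f j ≤ π (f ↾ j)`. -/
def ConstBddPred (k : ℕ) (π : List ℕ → ℕ) (f : ℕ → ℕ) : Prop :=
  ∀ᶠ i in atTop, ∃ j : ℕ, i ≤ j ∧ j < i + k ∧ f j ≤ π (seg f j)

/-- The constant bounding evasion number `𝔢^const_≤(k)`. -/
def eConstLe (k : ℕ) : Cardinal :=
  sInf {c | ∃ F : Set (ℕ → ℕ),
    (∀ π : List ℕ → ℕ, ∃ f ∈ F, ¬ ConstBddPred k π f) ∧ Cardinal.mk F = c}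

/-- The constant bounding prediction number `𝔳^const_≤(k)`. -/
def vConstLe (k : ℕ) : Cardinal :=
  sInf {c | ∃ Ps : Set (List ℕ → ℕ),
    (∀ f : ℕ → ℕ, ∃ π ∈ Ps, ConstBddPred k π f) ∧ Cardinal.mk Ps = c}

/-- The asymptotic density zero ideal `𝒵` on `ω`. -/
def densityZero : Set (Set ℕ) :=
  {A : Set ℕ | Tendsto (fun n : ℕ => ((A ∩ Iio n).ncard : ℝ) / (n : ℝ)) atTop (nhds (0 : ℝ))}

/-- The σ-ideal `ℰ` on `2^ω` generated by the closed null sets. -/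
def EIdeal : Set (Set (ℕ → Bool)) :=
  {A | ∃ C : ℕ → Set (ℕ → Bool),
    (∀ n, IsClosedCantor (C n) ∧ IsNullCantor (C n)) ∧ A ⊆ ⋃ n, C n}

/-!
Lower bounds: if `A ∈ M_I` contains a product `∏ₘ Q m` with `x₀ ∈ Q m` for all `m`, then one
generator `φ j` of `A` eventually contains the whole of `Q m` along a single string `s` padded by
`x₀`; otherwise a fusion construction yields a point of `∏ₘ Q m` that escapes every `φ j`
infinitely often. For finite `Q m` this turns a family cofinal in `K_I` into a dominating family of
the same size (up to `ℵ₀`), and for `Q ⟨n, k⟩ ⊇ B n` into a witness for `cof*_ω(I)`.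

Upper bound: a countable `Ā ⊆ I` is absorbed by an increasing sequence `E j ∈ I`, i.e. every
`B ⊆* A ∈ Ā` lies in some `E j`. A generator `{x | ∀^∞ m, x m ∈ φ (c x m)}` whose values `φ k` are
almost covered by `Ā` is then contained in `{x | ∀^∞ m, x m ∈ E (g (c x m))}` for all `g` dominating
the indices `j`; this is `K_I` for `c x m = m` and `M_I` for `c x m` a code of `x ↾ m`.
-/

open Function

namespace IsIdealOn

variable {X : Type} {I : Set (Set X)}

lemma nonempty (hI : IsIdealOn I) : Nonempty X :=
  nonempty_iff_univ_nonempty.2 <| nonempty_iff_ne_empty.2 fun h =>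
    hI.proper (h ▸ hI.finite_mem finite_empty)

lemma compl_nonempty (hI : IsIdealOn I) {A : Set X} (hA : A ∈ I) : Aᶜ.Nonempty :=
  nonempty_compl.2 fun h => hI.proper (h ▸ hA)

lemma union_mem_iff (hI : IsIdealOn I) {A B : Set X} : A ∪ B ∈ I ↔ A ∈ I ∧ B ∈ I :=
  ⟨fun h => ⟨hI.subset_mem subset_union_left h, hI.subset_mem subset_union_right h⟩,
    fun h => hI.union_mem h.1 h.2⟩

lemma insert_mem (hI : IsIdealOn I) (x : X) {A : Set X} (hA : A ∈ I) : insert x A ∈ I :=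
  insert_eq x A ▸ hI.union_mem (hI.finite_mem (finite_singleton x)) hA

lemma exists_monotone_absorbing [Countable X] (hI : IsIdealOn I) {S : Set (Set X)}
    (hSc : S.Countable) (hSI : S ⊆ I) :
    ∃ E : ℕ → Set X, Monotone E ∧ (∀ j, E j ∈ I) ∧ ∀ B, ∀ A ∈ S, AlSub B A → ∃ j, B ⊆ E j := by
  obtain ⟨e, he⟩ := Countable.exists_injective_nat X
  obtain ⟨F, hF⟩ := (hSc.insert ∅).exists_eq_range (insert_nonempty ∅ S)
  have hFI : ∀ k, F k ∈ I := fun k => by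
    rcases (hF ▸ mem_range_self k : F k ∈ insert ∅ S) with h | h
    · exact h ▸ hI.finite_mem finite_empty
    · exact hSI h
  let G : ℕ → Set X := fun k => F k ∪ {v | e v ≤ k}
  refine ⟨partialSups G, (partialSups G).monotone, fun j =>
    (partialSups_iff_forall (· ∈ I) hI.union_mem_iff).2 fun k _ =>
      hI.union_mem (hFI k) (hI.finite_mem ((finite_Iic k).preimage he.injOn)), ?_⟩
  rintro B A hA hBA
  obtain ⟨k, rfl⟩ : A ∈ range F := hF ▸ mem_insert_of_mem ∅ hA
  obtain ⟨N, hN⟩ := (hBA.image e).bddAbove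
  refine ⟨max k N, fun v hv => ?_⟩
  by_cases hvF : v ∈ F k
  · exact le_partialSups_of_le G (le_max_left k N) (Or.inl hvF)
  · exact le_partialSups_of_le G (le_max_right k N) (Or.inr (hN (mem_image_of_mem e ⟨hv, hvF⟩)))

end IsIdealOn

section Fusion

variable {X : Type}

lemma length_seg (x : ℕ → X) (m : ℕ) : (seg x m).length = m := by simp [seg]

lemma seg_injective (x : ℕ → X) : Injective (seg x) := fun a b h => by
  simpa only [length_seg] using congrArg List.length h

lemma seg_congr {x y : ℕ → X} {m : ℕ} (h : ∀ i < m, x i = y i) : seg x m = seg y m :=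
  List.map_congr_left fun i hi => h i (List.mem_range.1 hi)

def padSeq (x₀ : X) (s : List X) : ℕ → X := fun i => s.getD i x₀

lemma padSeq_seg_of_lt (x₀ : X) (x : ℕ → X) {m i : ℕ} (h : i < m) :
    padSeq x₀ (seg x m) i = x i := by
  simp [padSeq, seg, h]

lemma padSeq_seg_of_le (x₀ : X) (x : ℕ → X) {m i : ℕ} (h : m ≤ i) :
    padSeq x₀ (seg x m) i = x₀ :=
  List.getD_eq_default _ _ (by rwa [length_seg])

lemma exists_eqOn_Iio_of_eqOn_succ {α : Type*} {y : ℕ → ℕ → α} {L : ℕ → ℕ} (hL : StrictMono L)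
    (h : ∀ k, EqOn (y (k + 1)) (y k) (Iio (L k))) :
    ∃ x : ℕ → α, ∀ k, EqOn x (y k) (Iio (L k)) := by
  have hstable : ∀ k k', k ≤ k' → EqOn (y k') (y k) (Iio (L k)) := by
    intro k k' hk
    induction k', hk using Nat.le_induction with
    | base => exact fun _ _ => rfl
    | succ k' hk ih => exact ((h k').mono (Iio_subset_Iio (hL.monotone hk))).trans ih
  refine ⟨fun i => y (i + 1) i, fun k i hi => ?_⟩
  rcases le_total k (i + 1) with hk | hk
  · exact hstable k (i + 1) hk hi
  · exact (hstable (i + 1) k hk ((Nat.lt_succ_self i).trans_le (hL.id_le _))).symm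

lemma exists_mem_pi_frequently_not_mem {Q : ℕ → Set X} {x₀ : X} (hx₀ : ∀ m, x₀ ∈ Q m)
    {φ : ℕ → List X → Set X}
    (H : ∀ j s, ∃ᶠ m in atTop, ¬ Q m ⊆ φ j (seg (padSeq x₀ s) m)) :
    ∃ x ∈ pi univ Q, ∀ j, ∃ᶠ m in atTop, x m ∉ φ j (seg x m) := by
  have H' : ∀ j (s : List X), ∃ m ≥ s.length, ∃ v ∈ Q m, v ∉ φ j (seg (padSeq x₀ s) m) :=
    fun j s =>
      let ⟨m, hm, hQ⟩ := frequently_atTop.1 (H j s) s.length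
      let ⟨v, hv, hvφ⟩ := not_subset.1 hQ
      ⟨m, hm, v, hv, hvφ⟩
  choose M hM V hVQ hVφ using H'
  -- stage `k` escapes `φ k.unpair.1`, so every `φ j` is escaped at infinitely many stages
  obtain ⟨s, hs0, hs⟩ : ∃ s : ℕ → List X, s 0 = [] ∧ ∀ k, s (k + 1) =
      seg (update (padSeq x₀ (s k)) (M k.unpair.1 (s k)) (V k.unpair.1 (s k)))
        (M k.unpair.1 (s k) + 1) :=
    ⟨fun k => Nat.rec [] (fun k t => seg (update (padSeq x₀ t) (M k.unpair.1 t)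
      (V k.unpair.1 t)) (M k.unpair.1 t + 1)) k, rfl, fun _ => rfl⟩
  set m : ℕ → ℕ := fun k => M k.unpair.1 (s k)
  set v : ℕ → X := fun k => V k.unpair.1 (s k)
  set y : ℕ → ℕ → X := fun k => padSeq x₀ (s k)
  have hlen : ∀ k, (s (k + 1)).length = m k + 1 := fun k => by rw [hs, length_seg]
  have hstep : ∀ k i, i < m k + 1 → y (k + 1) i = update (y k) (m k) (v k) i := fun k i hi => by
    show padSeq x₀ (s (k + 1)) i = _
    rw [hs]
    exact padSeq_seg_of_lt _ _ hi
  have hm : ∀ k, (s k).length ≤ m k := fun k => hM _ _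
  have hL : StrictMono fun k => (s k).length :=
    strictMono_nat_of_lt_succ fun k => by simp only [hlen]; have := hm k; omega
  have hagree : ∀ k, EqOn (y (k + 1)) (y k) (Iio (s k).length) := fun k i hi => by
    have him : i < m k := lt_of_lt_of_le hi (hm k)
    rw [hstep k i (by omega), update_of_ne him.ne]
  have hyQ : ∀ k i, y k i ∈ Q i := by
    intro k i
    induction k with
    | zero => simpa [y, hs0, padSeq] using hx₀ i
    | succ k ih =>
      by_cases hi : i < m k + 1
      · rw [hstep k i hi]
        by_cases him : i = m k
        · subst him; rw [update_self]; exact hVQ _ _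
        · rwa [update_of_ne him]
      · show padSeq x₀ (s (k + 1)) i ∈ Q i
        rw [hs, padSeq_seg_of_le _ _ (not_lt.1 hi)]
        exact hx₀ i
  obtain ⟨x, hx⟩ := exists_eqOn_Iio_of_eqOn_succ hL hagree
  refine ⟨x, fun i _ => ?_, fun j => frequently_atTop.2 fun N => ?_⟩
  · rw [hx (i + 1) ((Nat.lt_succ_self i).trans_le (hL.id_le _))]
    exact hyQ _ _
  · set k := Nat.pair j N
    have hxk : ∀ i < m k + 1, x i = update (y k) (m k) (v k) i := fun i hi =>
      (hx (k + 1) (by rw [mem_Iio, hlen]; exact hi)).trans (hstep k i hi)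
    refine ⟨m k, (Nat.right_le_pair j N).trans ((hL.id_le k).trans (hm k)), ?_⟩
    rw [hxk _ (Nat.lt_succ_self _), update_self,
      seg_congr fun i hi => (hxk i (by omega)).trans (update_of_ne hi.ne _ _)]
    have hj : k.unpair.1 = j := by simp [k]
    exact hj ▸ hVφ k.unpair.1 (s k)

lemma exists_eventually_subset_of_pi_subset {Q : ℕ → Set X} {x₀ : X} (hx₀ : ∀ m, x₀ ∈ Q m)
    {φ : ℕ → List X → Set X}
    (hcov : pi univ Q ⊆ ⋃ j, {x | ∀ᶠ m in atTop, x m ∈ φ j (seg x m)}) :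
    ∃ j s, ∀ᶠ m in atTop, Q m ⊆ φ j (seg (padSeq x₀ s) m) := by
  by_contra! H
  obtain ⟨x, hxQ, hx⟩ := exists_mem_pi_frequently_not_mem hx₀ H
  obtain ⟨j, hj⟩ := mem_iUnion.1 (hcov hxQ)
  obtain ⟨m, hm, hm'⟩ := (hj.and_frequently (hx j)).exists
  exact hm' hm

end Fusion

section Ideals

variable {X : Type} {I : Set (Set X)}

/-- `K_I` with the coordinate `m` in its generators replaced by a label `c x m`: `K_I` is the case
`c x m = m`, and `M_I` the case `c x m = code (x ↾ m)`. -/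
def KIdealAlong (I : Set (Set X)) (c : (ℕ → X) → ℕ → ℕ) : Set (Set (ℕ → X)) :=
  {A | ∃ φ : ℕ → ℕ → Set X, (∀ n k, φ n k ∈ I) ∧
    A ⊆ ⋃ n, {x : ℕ → X | ∀ᶠ m in atTop, x m ∈ φ n (c x m)}}

lemma KIdeal_eq_KIdealAlong (I : Set (Set X)) : KIdeal I = KIdealAlong I fun _ m => m := rfl

lemma MIdeal_eq_KIdealAlong {code : List X → ℕ} (hcode : Injective code) :
    MIdeal I = KIdealAlong I fun x m => code (seg x m) := by
  ext A
  constructor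
  · rintro ⟨φ, hφI, hA⟩
    refine ⟨fun n k => φ n (invFun code k), fun n k => hφI _ _, ?_⟩
    simpa only [leftInverse_invFun hcode _] using hA
  · rintro ⟨φ, hφI, hA⟩
    exact ⟨fun n s => φ n (code s), fun n s => hφI _ _, hA⟩

lemma tendsto_code_seg {code : List X → ℕ} (hcode : Injective code) (x : ℕ → X) :
    Tendsto (fun m => code (seg x m)) atTop atTop :=
  (hcode.comp (seg_injective x)).nat_tendsto_atTop

lemma KIdeal_subset_MIdeal (I : Set (Set X)) : KIdeal I ⊆ MIdeal I := by
  rintro A ⟨φ, hφI, hA⟩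
  refine ⟨fun n s => φ n s.length, fun n s => hφI _ _, ?_⟩
  simpa only [length_seg] using hA

lemma pi_mem_KIdeal {Q : ℕ → Set X} (hQ : ∀ m, Q m ∈ I) : pi univ Q ∈ KIdeal I :=
  ⟨fun _ m => Q m, fun _ => hQ, fun _ hx =>
    mem_iUnion.2 ⟨0, .of_forall fun m => hx m (mem_univ m)⟩⟩

end Ideals

lemma exists_dominating_mk_eq_dNum :
    ∃ F : Set (ℕ → ℕ), (∀ f, ∃ g ∈ F, LeStar f g) ∧ #F = dNum := by
  have h : {c | ∃ F : Set (ℕ → ℕ), (∀ f, ∃ g ∈ F, LeStar f g) ∧ #F = c}.Nonempty :=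
    ⟨_, univ, fun f => ⟨f, mem_univ f, .of_forall fun _ => le_rfl⟩, rfl⟩
  exact csInf_mem h

lemma dNum_le_mk {F : Set (ℕ → ℕ)} (hF : ∀ f, ∃ g ∈ F, LeStar f g) : dNum ≤ #F :=
  csInf_le' ⟨F, hF, rfl⟩

lemma aleph0_lt_dNum : ℵ₀ < dNum := by
  obtain ⟨F, hF, hFmk⟩ := exists_dominating_mk_eq_dNum
  rw [← hFmk, ← not_le, Cardinal.mk_le_aleph0_iff, countable_coe_iff]
  intro hFc
  obtain ⟨G, hG⟩ := countable_iff_exists_subset_range.1 hFc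
  obtain ⟨g, hg, hfg⟩ := hF fun m => (Finset.range (m + 1)).sup (fun k => G k m) + 1
  obtain ⟨k, rfl⟩ := hG hg
  obtain ⟨m, hgm, hkm⟩ := (hfg.and (eventually_ge_atTop k)).exists
  replace hgm : (Finset.range (m + 1)).sup (fun k => G k m) + 1 ≤ G k m := hgm
  have hsup := Finset.le_sup (f := fun k => G k m) (Finset.mem_range.2 (Nat.lt_add_one_of_le hkm))
  omega

lemma dNum_le_of_le_mul_aleph0 {c : Cardinal} (h : dNum ≤ c * ℵ₀) : dNum ≤ c := by
  rcases le_total ℵ₀ c with hc | hc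
  · rwa [Cardinal.mul_aleph0_eq hc] at h
  · refine absurd (h.trans ?_) aleph0_lt_dNum.not_ge
    simpa [max_eq_right hc] using Cardinal.mul_le_max_of_aleph0_le_right (a := c) le_rfl

lemma cofStarOmegaFam_nonempty {X : Type} (I : Set (Set X)) : (cofStarOmegaFam I).Nonempty :=
  ⟨_, {S | S.Countable ∧ S ⊆ I}, fun _ h => h, fun B hB =>
    ⟨range B, ⟨countable_range B, range_subset_iff.2 hB⟩,
      fun n => ⟨B n, mem_range_self n, by simp [AlSub]⟩⟩, rfl⟩

lemma exists_cofinal_mk_eq_cofIdeal {Y : Type} (J : Set (Set Y)) :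
    ∃ 𝒜 ⊆ J, (∀ B ∈ J, ∃ A ∈ 𝒜, B ⊆ A) ∧ #𝒜 = cofIdeal J := by
  have h : {c | ∃ 𝒜 ⊆ J, (∀ B ∈ J, ∃ A ∈ 𝒜, B ⊆ A) ∧ #𝒜 = c}.Nonempty :=
    ⟨_, J, subset_rfl, fun B hB => ⟨B, hB, subset_rfl⟩, rfl⟩
  exact csInf_mem h

lemma lt_sInf_image_compl {X : Type} {e : X → ℕ} {B : Set X} {n : ℕ} (hB : Bᶜ.Nonempty)
    (h : {v | e v ≤ n} ⊆ B) : n < sInf (e '' Bᶜ) := by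
  obtain ⟨v, hv, hve⟩ := Nat.sInf_mem (hB.image e)
  rw [← hve]
  by_contra! hle
  exact hv (h hle)

section LowerBounds

variable {X : Type} [Countable X] {I : Set (Set X)}

lemma dNum_le_mk_of_cofinal (hI : IsIdealOn I) {𝒜 : Set (Set (ℕ → X))} (h𝒜 : 𝒜 ⊆ MIdeal I)
    (hcof : ∀ B ∈ KIdeal I, ∃ A ∈ 𝒜, B ⊆ A) : dNum ≤ #𝒜 := by
  obtain ⟨e, he⟩ := Countable.exists_injective_nat X
  obtain ⟨x₀⟩ := hI.nonempty
  choose Φ hΦI hΦ using fun A : 𝒜 => h𝒜 A.2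
  let G : 𝒜 × ℕ × List X → ℕ → ℕ := fun p m =>
    sInf (e '' (Φ p.1 p.2.1 (seg (padSeq x₀ p.2.2) m))ᶜ)
  have hdom : ∀ f, ∃ g ∈ range G, LeStar f g := by
    intro f
    obtain ⟨A, hA, hfA⟩ := hcof _ (pi_mem_KIdeal fun m =>
      hI.insert_mem x₀ (hI.finite_mem ((finite_Iic (f m)).preimage he.injOn)))
    obtain ⟨j, s, hjs⟩ :=
      exists_eventually_subset_of_pi_subset (fun m => mem_insert x₀ _) (hfA.trans (hΦ ⟨A, hA⟩))
    refine ⟨G (⟨A, hA⟩, j, s), mem_range_self _, hjs.mono fun m hm => ?_⟩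
    exact (lt_sInf_image_compl (hI.compl_nonempty (hΦI _ _ _)) ((subset_insert _ _).trans hm)).le
  refine dNum_le_of_le_mul_aleph0 ((dNum_le_mk hdom).trans (mk_range_le.trans ?_))
  simp [Cardinal.mk_prod]

lemma sInf_cofStarOmegaFam_le_mk_of_cofinal (hI : IsIdealOn I) {𝒜 : Set (Set (ℕ → X))}
    (h𝒜 : 𝒜 ⊆ MIdeal I) (hcof : ∀ B ∈ KIdeal I, ∃ A ∈ 𝒜, B ⊆ A) :
    sInf (cofStarOmegaFam I) ≤ #𝒜 := by
  obtain ⟨x₀⟩ := hI.nonempty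
  choose Φ hΦI hΦ using fun A : 𝒜 => h𝒜 A.2
  let Ā : 𝒜 → Set (Set X) := fun A => range fun p : ℕ × List X => Φ A p.1 p.2
  refine (csInf_le' (s := cofStarOmegaFam I) ⟨range Ā, ?_, fun B hB => ?_, rfl⟩).trans
    mk_range_le
  · rintro _ ⟨A, rfl⟩
    exact ⟨countable_range _, range_subset_iff.2 fun p => hΦI A _ _⟩
  obtain ⟨A, hA, hBA⟩ := hcof _ (pi_mem_KIdeal fun m => hI.insert_mem x₀ (hB m.unpair.1))
  obtain ⟨j, s, hjs⟩ :=
    exists_eventually_subset_of_pi_subset (fun m => mem_insert x₀ _) (hBA.trans (hΦ ⟨A, hA⟩))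
  obtain ⟨N, hN⟩ := eventually_atTop.1 hjs
  refine ⟨Ā ⟨A, hA⟩, mem_range_self _, fun n =>
    ⟨_, mem_range_self (j, seg (padSeq x₀ s) (n.pair N)), ?_⟩⟩
  have hsub := (subset_insert _ _).trans (hN _ (Nat.right_le_pair n N))
  rw [Nat.unpair_pair] at hsub
  simp [AlSub, sdiff_eq_empty.2 hsub]

lemma max_le_cofIdeal (hI : IsIdealOn I) {J : Set (Set (ℕ → X))} (hJM : J ⊆ MIdeal I)
    (hKJ : KIdeal I ⊆ J) : max dNum (sInf (cofStarOmegaFam I)) ≤ cofIdeal J := by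
  obtain ⟨𝒜, h𝒜J, h𝒜, h𝒜mk⟩ := exists_cofinal_mk_eq_cofIdeal J
  have hcof : ∀ B ∈ KIdeal I, ∃ A ∈ 𝒜, B ⊆ A := fun B hB => h𝒜 B (hKJ hB)
  rw [← h𝒜mk]
  exact max_le (dNum_le_mk_of_cofinal hI (h𝒜J.trans hJM) hcof)
    (sInf_cofStarOmegaFam_le_mk_of_cofinal hI (h𝒜J.trans hJM) hcof)

end LowerBounds

section UpperBound

variable {X : Type} {I : Set (Set X)}

lemma exists_forall_leStar_subset {E : ℕ → Set X} (hE : Monotone E) {c : (ℕ → X) → ℕ → ℕ}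
    (hc : ∀ x, Tendsto (c x) atTop atTop) {φ : ℕ → ℕ → Set X} (hφ : ∀ n k, ∃ j, φ n k ⊆ E j) :
    ∃ f : ℕ → ℕ, ∀ g, LeStar f g →
      ⋃ n, {x : ℕ → X | ∀ᶠ m in atTop, x m ∈ φ n (c x m)} ⊆
        {x | ∀ᶠ m in atTop, x m ∈ E (g (c x m))} := by
  choose idx hidx using hφ
  refine ⟨fun k => (Finset.range (k + 1)).sup fun n => idx n k, fun g hfg x hx => ?_⟩
  obtain ⟨n, hn⟩ := mem_iUnion.1 hx
  filter_upwards [hn, (hc x).eventually hfg, (hc x).eventually (eventually_ge_atTop n)]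
    with m hm hfgm hnm
  exact hE ((Finset.le_sup (f := fun n => idx n (c x m))
    (Finset.mem_range.2 (Nat.lt_add_one_of_le hnm))).trans hfgm) (hidx n _ hm)

lemma cofIdeal_KIdealAlong_le [Countable X] (hI : IsIdealOn I) {c : (ℕ → X) → ℕ → ℕ}
    (hc : ∀ x, Tendsto (c x) atTop atTop) :
    cofIdeal (KIdealAlong I c) ≤ max dNum (sInf (cofStarOmegaFam I)) := by
  obtain ⟨D, hD, hDmk⟩ := exists_dominating_mk_eq_dNum
  obtain ⟨𝒜, h𝒜, h𝒜cov, h𝒜mk⟩ := csInf_mem (cofStarOmegaFam_nonempty I)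
  choose E hEmono hEI hEabs using fun S : 𝒜 =>
    hI.exists_monotone_absorbing (h𝒜 S S.2).1 (h𝒜 S S.2).2
  let U : 𝒜 × D → Set (ℕ → X) := fun p => {x | ∀ᶠ m in atTop, x m ∈ E p.1 (p.2.1 (c x m))}
  have hU : ∀ p, U p ∈ KIdealAlong I c := fun p =>
    ⟨fun _ k => E p.1 (p.2.1 k), fun _ _ => hEI _ _, fun _ hx => mem_iUnion.2 ⟨0, hx⟩⟩
  have hcof : ∀ B ∈ KIdealAlong I c, ∃ A ∈ range U, B ⊆ A := by
    rintro B ⟨φ, hφI, hB⟩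
    obtain ⟨S, hS, hSφ⟩ := h𝒜cov (fun i => φ i.unpair.1 i.unpair.2) fun i => hφI _ _
    obtain ⟨f, hf⟩ := exists_forall_leStar_subset (hEmono ⟨S, hS⟩) hc (φ := φ) fun n k => by
      obtain ⟨A, hA, hφA⟩ := hSφ (Nat.pair n k)
      simp only [Nat.unpair_pair] at hφA
      exact hEabs ⟨S, hS⟩ _ A hA hφA
    obtain ⟨g, hg, hfg⟩ := hD f
    exact ⟨_, mem_range_self (⟨S, hS⟩, ⟨g, hg⟩), hB.trans (hf g hfg)⟩
  calc cofIdeal (KIdealAlong I c) ≤ #(range U) := csInf_le' ⟨_, range_subset_iff.2 hU, hcof, rfl⟩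
    _ ≤ #𝒜 * #D := mk_range_le.trans (by simp [Cardinal.mk_prod])
    _ ≤ max dNum (sInf (cofStarOmegaFam I)) := by
      rw [h𝒜mk, hDmk, max_comm]
      exact Cardinal.mul_le_max_of_aleph0_le_right aleph0_lt_dNum.le

end UpperBound

/-- `cof(M_I) = cof(K_I) = max {𝔡, cof*_ω(I)}`. -/
theorem stmt1 (X : Type) [Countable X] (I : Set (Set X)) (hI : IsIdealOn I) :
    cofIdeal (MIdeal I) = cofIdeal (KIdeal I) ∧
    cofIdeal (MIdeal I) = max dNum (sInf (cofStarOmegaFam I)) := by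
  obtain ⟨code, hcode⟩ := Countable.exists_injective_nat (List X)
  have hM : cofIdeal (MIdeal I) = max dNum (sInf (cofStarOmegaFam I)) := by
    refine le_antisymm ?_ (max_le_cofIdeal hI subset_rfl (KIdeal_subset_MIdeal I))
    rw [MIdeal_eq_KIdealAlong hcode]
    exact cofIdeal_KIdealAlong_le hI (tendsto_code_seg hcode)
  have hK : cofIdeal (KIdeal I) = max dNum (sInf (cofStarOmegaFam I)) := by
    refine le_antisymm ?_ (max_le_cofIdeal hI (KIdeal_subset_MIdeal I) subset_rfl)
    rw [KIdeal_eq_KIdealAlong]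
    exact cofIdeal_KIdealAlong_le hI fun _ => tendsto_id
  exact ⟨hM.trans hK.symm, hM⟩

end
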